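/- (Lemma 2(ii)) Let ρ be a pure 3-qubit state that is a product across the bipartition j|lm, i.e. (up to the corresponding reordering of tensor factors) ρ = |φ_j⟩⟨φ_j| ⊗ |χ_{lm}⟩⟨χ_{lm}| with φ_j ∈ ℂ² and χ_{lm} ∈ ℂ² ⊗ ℂ² unit vectors. Then the j-matricization of its full correlation tensor T_{i₁i₂i₃} = tr(ρ (σ_{i₁} ⊗ σ_{i₂} ⊗ σ_{i₃})) satisfies ‖T_{\underline{j}}‖_k ≤ √3 for every k. -/

import Mathlib

/-!
For a product state the correlation tensor factorises as
`T_{i₁i₂i₃} = a_{i_j} b_{i_{j+1} i_{j+2}}`, with `a` the Bloch vector of `φ` and `b` the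
correlation matrix of `χ`. Hence the `j`-matricization is the rank-one matrix `a (vec b)ᵀ`, and
each Ky Fan norm is at most its trace norm `‖a‖ ‖b‖`. Here `‖a‖ = 1`, while the purity of `χ`
gives `‖b‖² = 3 - ‖r_A‖² - ‖r_B‖² ≤ 3`, where `r_A`, `r_B` are the local Bloch vectors of `χ`.
-/

open Matrix BigOperators ComplexOrder

noncomputable section

/-- The three standard Pauli matrices. -/
def pauli : Fin 3 → Matrix (Fin 2) (Fin 2) ℂ :=
  ![!![0, 1; 1, 0], !![0, -Complex.I; Complex.I, 0], !![1, 0; 0, -1]]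

/-- The tensor (Kronecker) product of `n` local operators, acting on
`(ℂ²)^{⊗n}` with the Hilbert space indexed by functions `Fin n → Fin 2`. -/
def tensorOp {n : ℕ} (A : Fin n → Matrix (Fin 2) (Fin 2) ℂ) :
    Matrix (Fin n → Fin 2) (Fin n → Fin 2) ℂ :=
  fun r c => ∏ j, A j (r j) (c j)

/-- The full correlation tensor of an `n`-qubit state:
`T_{i₁⋯i_n} = tr(ρ (σ_{i₁} ⊗ ⋯ ⊗ σ_{i_n}))`. -/
def corr {n : ℕ} (ρ : Matrix (Fin n → Fin 2) (Fin n → Fin 2) ℂ)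
    (f : Fin n → Fin 3) : ℝ :=
  ((ρ * tensorOp fun j => pauli (f j)).trace).re

/-- The `A`-matricization of an `n`-index tensor `v`: the real matrix whose row
index collects the indices in `A` and whose column index collects the remaining
indices. -/
def matricize {n m : ℕ} (A : Finset (Fin n)) (v : (Fin n → Fin m) → ℝ) :
    Matrix ({j // j ∈ A} → Fin m) ({j // j ∉ A} → Fin m) ℝ :=
  fun r c => v fun j => if h : j ∈ A then r ⟨j, h⟩ else c ⟨j, h⟩

/-- The singular values of a real matrix `M`: the square roots of the
eigenvalues of `MᵀM = MᴴM`. -/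
def singVals {I J : Type*} [Fintype I] [Fintype J] [DecidableEq J]
    (M : Matrix I J ℝ) : J → ℝ :=
  fun j => Real.sqrt ((Matrix.posSemidef_conjTranspose_mul_self M).1.eigenvalues j)

/-- The Ky Fan `k` norm: the maximum, over sets of `k` of the singular values,
of their sum — equivalently, the sum of the `k` largest singular values. -/
def kyFanNorm {I J : Type*} [Fintype I] [Fintype J] [DecidableEq J]
    (k : ℕ) (M : Matrix I J ℝ) : ℝ :=
  (Finset.univ : Finset (Finset J)).sup' ⟨∅, Finset.mem_univ ∅⟩
    fun s => if s.card = k then ∑ j ∈ s, singVals M j else 0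

/-- The trace norm: the sum of all singular values. -/
def traceNorm {I J : Type*} [Fintype I] [Fintype J] [DecidableEq J]
    (M : Matrix I J ℝ) : ℝ :=
  ∑ j, singVals M j

open scoped Kronecker

section SingularValues

variable {I J : Type*} [Fintype I] [Fintype J]

theorem trace_conjTranspose_mul_vecMulVec (u : I → ℝ) (v : J → ℝ) :
    ((vecMulVec u v)ᴴ * vecMulVec u v).trace = (∑ i, u i ^ 2) * ∑ j, v j ^ 2 := by
  simp only [trace, diag, mul_apply, conjTranspose_apply, vecMulVec_apply, star_trivial,
    Finset.sum_mul_sum]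
  rw [Finset.sum_comm]
  exact Finset.sum_congr rfl fun _ _ => Finset.sum_congr rfl fun _ _ => by ring

variable [DecidableEq J]

theorem singVals_nonneg (M : Matrix I J ℝ) (j : J) : 0 ≤ singVals M j :=
  Real.sqrt_nonneg _

theorem kyFanNorm_le_traceNorm (k : ℕ) (M : Matrix I J ℝ) : kyFanNorm k M ≤ traceNorm M := by
  refine Finset.sup'_le _ _ fun s _ => ?_
  split_ifs
  · exact Finset.sum_le_univ_sum_of_nonneg (singVals_nonneg M)
  · exact Finset.sum_nonneg fun j _ => singVals_nonneg M j

/-- Cauchy–Schwarz against the indicator of the nonzero eigenvalues of `MᴴM`. -/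
theorem traceNorm_le_sqrt_rank_mul_sqrt_trace (M : Matrix I J ℝ) :
    traceNorm M ≤ √M.rank * √(Mᴴ * M).trace := by
  have hMM := posSemidef_conjTranspose_mul_self M
  let μ := hMM.1.eigenvalues
  let ind : J → ℝ := fun j => if μ j = 0 then 0 else 1
  have hsupport : ∀ j, ind j * √(μ j) = √(μ j) := fun j => by
    by_cases h : μ j = 0 <;> simp [ind, h]
  have hcard : ∑ j, ind j ^ 2 = M.rank := by
    rw [← rank_conjTranspose_mul_self, hMM.1.rank_eq_card_non_zero_eigs, Fintype.card_subtype]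
    simp [ind, μ, Finset.sum_ite, Finset.filter_not]
  have htrace : ∑ j, √(μ j) ^ 2 = (Mᴴ * M).trace := by
    rw [hMM.1.trace_eq_sum_eigenvalues]
    exact Finset.sum_congr rfl fun j _ => Real.sq_sqrt (hMM.eigenvalues_nonneg j)
  calc traceNorm M = ∑ j, ind j * √(μ j) := by simp only [hsupport]; rfl
    _ ≤ √(∑ j, ind j ^ 2) * √(∑ j, √(μ j) ^ 2) := Real.sum_mul_le_sqrt_mul_sqrt _ _ _
    _ = √M.rank * √(Mᴴ * M).trace := by rw [hcard, htrace]

theorem traceNorm_vecMulVec_le (u : I → ℝ) (v : J → ℝ) :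
    traceNorm (vecMulVec u v) ≤ √(∑ i, u i ^ 2) * √(∑ j, v j ^ 2) := by
  have hrank : √(vecMulVec u v).rank ≤ 1 :=
    Real.sqrt_le_one.mpr (by exact_mod_cast rank_vecMulVec_le u v)
  calc traceNorm (vecMulVec u v)
      ≤ √(vecMulVec u v).rank * √((vecMulVec u v)ᴴ * vecMulVec u v).trace :=
        traceNorm_le_sqrt_rank_mul_sqrt_trace _
    _ ≤ √((∑ i, u i ^ 2) * ∑ j, v j ^ 2) := by
        rw [trace_conjTranspose_mul_vecMulVec]
        exact mul_le_of_le_one_left (Real.sqrt_nonneg _) hrank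
    _ = √(∑ i, u i ^ 2) * √(∑ j, v j ^ 2) := Real.sqrt_mul (by positivity) _

end SingularValues

section Expectation

variable {R m n : Type*} [CommSemiring R] [Fintype m] [Fintype n]

theorem kronecker_mulVec_mul (A : Matrix m m R) (B : Matrix n n R) (v : m → R) (w : n → R) :
    (A ⊗ₖ B) *ᵥ (fun p => v p.1 * w p.2) = fun p => (A *ᵥ v) p.1 * (B *ᵥ w) p.2 := by
  ext p
  simp only [mulVec, dotProduct, kroneckerMap_apply, Fintype.sum_prod_type, Fintype.sum_mul_sum]
  exact Finset.sum_congr rfl fun _ _ => Finset.sum_congr rfl fun _ _ => by ring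

theorem dotProduct_mul_mul (v v' : m → R) (w w' : n → R) :
    (fun p : m × n => v p.1 * w p.2) ⬝ᵥ (fun p => v' p.1 * w' p.2)
      = (v ⬝ᵥ v') * (w ⬝ᵥ w') := by
  simp only [dotProduct, Fintype.sum_prod_type, Fintype.sum_mul_sum]
  exact Finset.sum_congr rfl fun _ _ => Finset.sum_congr rfl fun _ _ => by ring

variable [StarRing R]

theorem trace_vecMulVec_star_mul (v : n → R) (A : Matrix n n R) :
    (vecMulVec v (star v) * A).trace = star v ⬝ᵥ A *ᵥ v := by
  simp only [trace, diag, mul_apply, vecMulVec_apply, dotProduct, mulVec, Finset.mul_sum,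
    Pi.star_apply]
  rw [Finset.sum_comm]
  exact Finset.sum_congr rfl fun _ _ => Finset.sum_congr rfl fun _ _ => by ring

theorem star_dotProduct_submatrix_mulVec (e : m ≃ n) (A : Matrix n n R) (v : n → R) :
    star (v ∘ e) ⬝ᵥ A.submatrix e e *ᵥ (v ∘ e) = star v ⬝ᵥ A *ᵥ v := by
  simp only [dotProduct, mulVec, submatrix_apply, Function.comp_apply, Pi.star_apply]
  exact Fintype.sum_equiv e _ _ fun x => by
    rw [Fintype.sum_equiv e _ (fun y => A (e x) y * v y) fun _ => rfl]

theorem star_dotProduct_kronecker_mulVec (A : Matrix m m R) (B : Matrix n n R) (v : m → R)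
    (w : n → R) :
    star (fun p : m × n => v p.1 * w p.2) ⬝ᵥ (A ⊗ₖ B) *ᵥ (fun p => v p.1 * w p.2)
      = (star v ⬝ᵥ A *ᵥ v) * (star w ⬝ᵥ B *ᵥ w) := by
  rw [kronecker_mulVec_mul, ← dotProduct_mul_mul]
  congr 1
  ext p
  exact star_mul' _ _

end Expectation

theorem Matrix.IsHermitian.kronecker {R m n : Type*} [CommMagma R] [StarMul R]
    {A : Matrix m m R} {B : Matrix n n R} (hA : A.IsHermitian) (hB : B.IsHermitian) :
    (A ⊗ₖ B).IsHermitian := by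
  rw [IsHermitian, conjTranspose_kronecker, hA.eq, hB.eq]

theorem pauli_isHermitian (i : Fin 3) : (pauli i).IsHermitian := by
  fin_cases i <;> ext a b <;> fin_cases a <;> fin_cases b <;> simp [pauli]

def blochVector (φ : Fin 2 → ℂ) (i : Fin 3) : ℝ :=
  (star φ ⬝ᵥ pauli i *ᵥ φ).re

def twoQubitCorr (χ : Fin 2 × Fin 2 → ℂ) (p : Fin 3 × Fin 3) : ℝ :=
  (star χ ⬝ᵥ (pauli p.1 ⊗ₖ pauli p.2) *ᵥ χ).re

theorem sum_blochVector_sq (φ : Fin 2 → ℂ) :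
    ∑ i, blochVector φ i ^ 2 = (∑ x, Complex.normSq (φ x)) ^ 2 := by
  simp [blochVector, pauli, Fin.sum_univ_three, Fin.sum_univ_two, dotProduct, mulVec,
    Complex.normSq_apply]
  ring

/-- The Pauli expansion of `tr ρ² = (tr ρ)²` for the pure state `ρ = |χ⟩⟨χ|`. -/
theorem sum_twoQubitCorr_sq_add_sum_local_sq (χ : Fin 2 × Fin 2 → ℂ) :
    ∑ p, twoQubitCorr χ p ^ 2
      + ∑ i, (star χ ⬝ᵥ (pauli i ⊗ₖ 1) *ᵥ χ).re ^ 2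
      + ∑ i, (star χ ⬝ᵥ (1 ⊗ₖ pauli i) *ᵥ χ).re ^ 2
      = 3 * (∑ x, Complex.normSq (χ x)) ^ 2 := by
  simp [twoQubitCorr, pauli, Fin.sum_univ_three, Fin.sum_univ_two, dotProduct, mulVec,
    Complex.normSq_apply, Fintype.sum_prod_type, kroneckerMap_apply, one_apply]
  ring

theorem sum_twoQubitCorr_sq_le (χ : Fin 2 × Fin 2 → ℂ) :
    ∑ p, twoQubitCorr χ p ^ 2 ≤ 3 * (∑ x, Complex.normSq (χ x)) ^ 2 := by
  rw [← sum_twoQubitCorr_sq_add_sum_local_sq, add_assoc]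
  exact le_add_of_nonneg_right (by positivity)

namespace Fin

theorem eq_or_eq_add_one_or_eq_add_two (j i : Fin 3) : i = j ∨ i = j + 1 ∨ i = j + 2 := by
  revert i j; decide

theorem prod_univ_three_rotate {M : Type*} [CommMonoid M] (g : Fin 3 → M) (j : Fin 3) :
    ∏ i, g i = g j * (g (j + 1) * g (j + 2)) := by
  rw [← Equiv.prod_comp (Equiv.addLeft j) g, Fin.prod_univ_three]
  simp [mul_assoc]

def splitAtEquiv (β : Type*) [Fintype β] (j : Fin 3) : (Fin 3 → β) ≃ β × β × β :=
  Equiv.ofBijective (fun r => (r j, r (j + 1), r (j + 2))) <| by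
    refine (Fintype.bijective_iff_injective_and_card _).mpr ⟨fun r s hrs => ?_, by simp; ring⟩
    simp only [Prod.mk.injEq] at hrs
    funext i
    rcases eq_or_eq_add_one_or_eq_add_two j i with rfl | rfl | rfl <;> tauto

def funComplSingletonEquiv (β : Type*) [Fintype β] (j : Fin 3) :
    ({i // i ∉ ({j} : Finset (Fin 3))} → β) ≃ β × β :=
  Equiv.ofBijective (fun c => (c ⟨j + 1, by simp⟩, c ⟨j + 2, by simp⟩)) <| by
    refine (Fintype.bijective_iff_injective_and_card _).mpr ⟨fun c d hcd => ?_, by simp; ring⟩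
    simp only [Prod.mk.injEq] at hcd
    funext ⟨i, hi⟩
    rcases eq_or_eq_add_one_or_eq_add_two j i with rfl | rfl | rfl
    · simp at hi
    · exact hcd.1
    · exact hcd.2

end Fin

theorem tensorOp_eq_submatrix_kronecker (A : Fin 3 → Matrix (Fin 2) (Fin 2) ℂ) (j : Fin 3) :
    tensorOp A = (A j ⊗ₖ (A (j + 1) ⊗ₖ A (j + 2))).submatrix
      (Fin.splitAtEquiv (Fin 2) j) (Fin.splitAtEquiv (Fin 2) j) := by
  ext r c
  simp [tensorOp, Fin.splitAtEquiv, Fin.prod_univ_three_rotate _ j]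

theorem corr_vecMulVec_star_eq_mul (j : Fin 3) {φ : Fin 2 → ℂ} {χ : Fin 2 × Fin 2 → ℂ}
    {Ψ : (Fin 3 → Fin 2) → ℂ} (hprod : ∀ r, Ψ r = φ (r j) * χ (r (j + 1), r (j + 2)))
    (f : Fin 3 → Fin 3) :
    corr (vecMulVec Ψ (star Ψ)) f
      = blochVector φ (f j) * twoQubitCorr χ (f (j + 1), f (j + 2)) := by
  have hΨ : Ψ = (fun p => φ p.1 * χ p.2) ∘ Fin.splitAtEquiv (Fin 2) j := funext hprod
  have hφ_real : (star φ ⬝ᵥ pauli (f j) *ᵥ φ).im = 0 :=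
    (pauli_isHermitian _).im_star_dotProduct_mulVec_self φ
  rw [corr, trace_vecMulVec_star_mul, tensorOp_eq_submatrix_kronecker _ j, hΨ,
    star_dotProduct_submatrix_mulVec, star_dotProduct_kronecker_mulVec, Complex.mul_re, hφ_real,
    zero_mul, sub_zero]
  rfl

theorem matricize_singleton_eq_vecMulVec {m : ℕ} (j : Fin 3) (a : Fin m → ℝ)
    (b : Fin m × Fin m → ℝ) :
    matricize {j} (fun f => a (f j) * b (f (j + 1), f (j + 2)))
      = vecMulVec (a ∘ Equiv.funUnique _ _) (b ∘ Fin.funComplSingletonEquiv _ j) := by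
  ext r c
  simp [matricize, vecMulVec_apply, Fin.funComplSingletonEquiv, Subsingleton.elim _ default]

/-- Lemma 2(ii): If a pure 3-qubit state is a product across the
bipartition `j | {j+1, j+2}` (this covers all bipartitions `j|lm`, up to
reordering of factors), then the `j`-matricization of its full correlation
tensor satisfies `‖T_{j̲}‖_k ≤ √3` for every `k`. -/
theorem one_vs_two_product_three_qubit_matricization_bound
    (j : Fin 3) (φ : Fin 2 → ℂ) (χ : Fin 2 × Fin 2 → ℂ)
    (hφ : ∑ x, Complex.normSq (φ x) = 1)
    (hχ : ∑ x, Complex.normSq (χ x) = 1)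
    (Ψ : (Fin 3 → Fin 2) → ℂ)
    (hprod : ∀ r, Ψ r = φ (r j) * χ (r (j + 1), r (j + 2)))
    (ρ : Matrix (Fin 3 → Fin 2) (Fin 3 → Fin 2) ℂ)
    (hρ : ρ = Matrix.vecMulVec Ψ (star Ψ)) :
    ∀ k : ℕ, kyFanNorm k (matricize {j} (corr ρ)) ≤ Real.sqrt 3 := by
  intro k
  subst hρ
  rw [funext (corr_vecMulVec_star_eq_mul j hprod), matricize_singleton_eq_vecMulVec]
  calc _ ≤ traceNorm _ := kyFanNorm_le_traceNorm k _
    _ ≤ √(∑ i, blochVector φ i ^ 2) * √(∑ p, twoQubitCorr χ p ^ 2) := by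
      refine (traceNorm_vecMulVec_le _ _).trans_eq ?_
      simp only [Function.comp_apply, Equiv.sum_comp _ (fun i => blochVector φ i ^ 2),
        Equiv.sum_comp _ (fun p => twoQubitCorr χ p ^ 2)]
    _ ≤ √3 := by
      rw [sum_blochVector_sq, hφ, one_pow, Real.sqrt_one, one_mul]
      exact Real.sqrt_le_sqrt (by simpa [hχ] using sum_twoQubitCorr_sq_le χ)
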